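/- Let L : M → [0,∞] be a Borel measurable function with exponential growth, i.e., β e^{γF(ξ)} ≤ L(ξ) ≤ α(1 + e^{F(ξ)}) for all ξ ∈ M, where α, β > 0, γ ≥ 1 and F : M → [0,∞] is Borel measurable. If F is convex with F(0) = 0 and F satisfies (a1) and (a2), then L satisfies (A1), (A2) and (Â3). -/

import Mathlib

open MeasureTheory Filter Topology
open scoped ENNReal ZeroAtInfty Pointwise

noncomputable section

/-- Euclidean space `ℝ^N`. -/
abbrev Esp (N : ℕ) := EuclideanSpace ℝ (Fin N)

/-- Euclidean space `ℝ^m` (target). -/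
abbrev Fsp (m : ℕ) := EuclideanSpace ℝ (Fin m)

/-- The space `M` of real `m × N` matrices, identified with the linear maps `ℝ^N → ℝ^m`. -/
abbrev Msp (m N : ℕ) := EuclideanSpace ℝ (Fin N) →L[ℝ] EuclideanSpace ℝ (Fin m)

instance (m N : ℕ) : MeasurableSpace (Msp m N) := borel _
instance (m N : ℕ) : BorelSpace (Msp m N) := ⟨rfl⟩

/-- The open unit cube `Y := (-1/2, 1/2)^N`. -/
def Ycube (N : ℕ) : Set (Esp N) := {y | ∀ i, y i ∈ Set.Ioo (-(1:ℝ)/2) (1/2)}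

/-- Smooth test functions compactly supported in `Ω`. -/
def IsTestOn {N : ℕ} (Ω : Set (Esp N)) (φ : Esp N → ℝ) : Prop :=
  ContDiff ℝ (⊤ : ℕ∞) φ ∧ HasCompactSupport φ ∧ tsupport φ ⊆ Ω

/-- `Du` is a weak (distributional) gradient of `u` on `Ω`. -/
def IsWeakGrad {m N : ℕ} (Ω : Set (Esp N)) (u : Esp N → Fsp m)
    (Du : Esp N → Msp m N) : Prop :=
  ∀ φ : Esp N → ℝ, IsTestOn Ω φ → ∀ v : Esp N,
    ∫ x in Ω, φ x • Du x v = - ∫ x in Ω, (fderiv ℝ φ x v) • u x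

/-- `u ∈ W^{1,q}(Ω; ℝ^m)` with weak gradient `Du`. -/
def MemW1 {m N : ℕ} (q : ℝ≥0∞) (Ω : Set (Esp N)) (u : Esp N → Fsp m)
    (Du : Esp N → Msp m N) : Prop :=
  MemLp u q (volume.restrict Ω) ∧ MemLp Du q (volume.restrict Ω) ∧ IsWeakGrad Ω u Du

/-- `ψ ∈ W^{1,q}_0(U; ℝ^m)` with weak gradient `Dψ`, via extension by zero:
`ψ`, extended by zero outside `U`, is a Sobolev function on all of `ℝ^N`. -/
def MemW10 {m N : ℕ} (q : ℝ≥0∞) (U : Set (Esp N)) (ψ : Esp N → Fsp m)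
    (Dψ : Esp N → Msp m N) : Prop :=
  MemW1 q Set.univ ψ Dψ ∧ ∀ x ∉ U, ψ x = 0

/-- Convergence `v n → u` in `L^p(A; ℝ^m)`. -/
def LpConv {m N : ℕ} (p : ℝ) (A : Set (Esp N)) (v : ℕ → Esp N → Fsp m)
    (u : Esp N → Fsp m) : Prop :=
  Tendsto (fun n => eLpNorm (v n - u) (ENNReal.ofReal p) (volume.restrict A)) atTop (𝓝 0)

/-- The `W^{1,q}`-quasiconvexification `Z_qL` of `L`. -/
def Zq {m N : ℕ} (q : ℝ≥0∞) (L : Msp m N → ℝ≥0∞) (ξ : Msp m N) : ℝ≥0∞ :=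
  ⨅ (ψ : Esp N → Fsp m) (Dψ : Esp N → Msp m N) (_ : MemW10 q (Ycube N) ψ Dψ),
    ∫⁻ y in Ycube N, L (ξ + Dψ y)

/-- `Ẑ_qL(ξ) := liminf_{t→1⁻} Z_qL(tξ)`. -/
def hatZ {m N : ℕ} (q : ℝ≥0∞) (L : Msp m N → ℝ≥0∞) (ξ : Msp m N) : ℝ≥0∞ :=
  Filter.liminf (fun t : ℝ => Zq q L (t • ξ)) (𝓝[<] (1:ℝ))

/-- The relaxed functional `Ī(u)`. -/
def relaxed {m N : ℕ} (p : ℝ) (Ω : Set (Esp N)) (L : Msp m N → ℝ≥0∞)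
    (u : Esp N → Fsp m) : ℝ≥0∞ :=
  ⨅ (v : ℕ → Esp N → Fsp m) (Dv : ℕ → Esp N → Msp m N)
    (_ : ∀ n, MemW1 (ENNReal.ofReal p) Ω (v n) (Dv n)) (_ : LpConv p Ω v u),
    Filter.liminf (fun n => ∫⁻ x in Ω, L (Dv n x)) atTop

/-- `u` is a continuous piecewise affine function on `Ω` with gradient `Du`. -/
def IsPwAffine {m N : ℕ} (Ω : Set (Esp N)) (u : Esp N → Fsp m)
    (Du : Esp N → Msp m N) : Prop :=
  ContinuousOn u Ω ∧
  ∃ (k : ℕ) (U : Fin k → Set (Esp N)) (ξ : Fin k → Msp m N) (b : Fin k → Fsp m),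
    (∀ i, IsOpen (U i)) ∧ (∀ i, U i ⊆ Ω) ∧ Pairwise (Function.onFun Disjoint U) ∧
    volume (Ω \ ⋃ i, U i) = 0 ∧
    (∀ i, ∀ x ∈ U i, u x = ξ i x + b i ∧ Du x = ξ i)

/-- A bounded open set has Lipschitz boundary (uniform cone condition). -/
def HasLipschitzBoundary {N : ℕ} (Ω : Set (Esp N)) : Prop :=
  ∀ x ∈ frontier Ω, ∃ (v : Esp N) (r ε θ : ℝ), 0 < r ∧ 0 < ε ∧ 0 < θ ∧ ‖v‖ = 1 ∧
    ∀ y ∈ Metric.ball x r ∩ closure Ω, ∀ z : Esp N, ‖z - v‖ < θ →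
      ∀ t ∈ Set.Ioo (0:ℝ) ε, y + t • z ∈ Ω

/-- `Ω` is strongly star-shaped. -/
def StronglyStarShaped {N : ℕ} (Ω : Set (Esp N)) : Prop :=
  ∃ x₀ ∈ Ω, ∀ t : ℝ, 1 < t →
    closure ((fun x => x - x₀) '' Ω) ⊆ t • ((fun x => x - x₀) '' Ω)

/-- Equi-integrability of a sequence of nonnegative functions. -/
def EquiIntegrable {α : Type*} [MeasurableSpace α] (μ : Measure α) (g : ℕ → α → ℝ≥0∞) : Prop :=
  ∀ ε : ℝ, 0 < ε → ∃ δ : ℝ, 0 < δ ∧ ∀ A : Set α, MeasurableSet A → μ A < ENNReal.ofReal δ →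
    ∀ n, ∫⁻ x in A, g n x ∂μ < ENNReal.ofReal ε

/-- Condition (C_{p,q}). -/
def CondC {m N : ℕ} (p : ℝ) (q : ℝ≥0∞) (L : Msp m N → ℝ≥0∞) : Prop :=
  ∀ ξ : Msp m N, ∀ v : ℕ → Esp N → Fsp m, ∀ Dv : ℕ → Esp N → Msp m N,
    (∀ n, MemW1 (ENNReal.ofReal p) (Ycube N) (v n) (Dv n)) →
    LpConv p (Ycube N) v (fun y => ξ y) →
    (⨆ n, ∫⁻ y in Ycube N, L (Dv n y)) < ⊤ →
    ∃ σ : ℕ → ℕ, StrictMono σ ∧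
      ∃ (w : ℕ → Esp N → Fsp m) (Dw : ℕ → Esp N → Msp m N),
        (∀ n, MemW10 q (Ycube N) (fun y => w n y - ξ y) (fun y => Dw n y - ξ)) ∧
        TendstoInMeasure (volume.restrict (Ycube N))
          (fun n y => Dv (σ n) y - Dw n y) atTop (fun _ => 0) ∧
        EquiIntegrable (volume.restrict (Ycube N)) (fun n y => L (Dw n y))

/-- Condition (Ĉ_{p,q}). -/
def CondCHat {m N : ℕ} (p : ℝ) (q : ℝ≥0∞) (L : Msp m N → ℝ≥0∞) : Prop :=
  ∀ t ∈ Set.Ioo (0:ℝ) 1, ∀ ξ : Msp m N, ∀ v : ℕ → Esp N → Fsp m, ∀ Dv : ℕ → Esp N → Msp m N,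
    (∀ n, MemW1 (ENNReal.ofReal p) (Ycube N) (v n) (Dv n)) →
    LpConv p (Ycube N) v (fun y => ξ y) →
    (⨆ n, ∫⁻ y in Ycube N, L (Dv n y)) < ⊤ →
    ∃ σ : ℕ → ℕ, StrictMono σ ∧
      ∃ (w : ℕ → Esp N → Fsp m) (Dw : ℕ → Esp N → Msp m N), ∃ s ∈ Set.Ioo (0:ℝ) 1,
        (∀ n, MemW10 q (Ycube N) (fun y => w n y - (t • ξ) y) (fun y => Dw n y - t • ξ)) ∧
        TendstoInMeasure (volume.restrict (Ycube N))
          (fun n y => t • Dv (σ n) y - Dw n y) atTop (fun _ => 0) ∧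
        EquiIntegrable (volume.restrict (Ycube N)) (fun n y => L (Dw n y)) ∧
        (∀ n, ∀ᵐ y ∂(volume.restrict (Ycube N)),
          Dw n y ∈ s • closure {ζ : Msp m N | L ζ < ⊤})

/-- Condition (H_{p,q}). -/
def CondH {m N : ℕ} (p : ℝ) (q : ℝ≥0∞) (Ω : Set (Esp N)) (L : Msp m N → ℝ≥0∞) : Prop :=
  ∀ (u : Esp N → Fsp m) (Du : Esp N → Msp m N),
    MemW1 (ENNReal.ofReal p) Ω u Du → (¬ ∃ D, IsPwAffine Ω u D) →
    (∫⁻ x in Ω, Zq q L (Du x)) < ⊤ →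
    ∃ (v : ℕ → Esp N → Fsp m) (Dv : ℕ → Esp N → Msp m N),
      (∀ n, IsPwAffine Ω (v n) (Dv n)) ∧ LpConv p Ω v u ∧
      Filter.limsup (fun n => ∫⁻ x in Ω, Zq q L (Dv n x)) atTop ≤ ∫⁻ x in Ω, Zq q L (Du x)

/-- Condition (Ĥ_{p,q}). -/
def CondHHat {m N : ℕ} (p : ℝ) (q : ℝ≥0∞) (Ω : Set (Esp N)) (L : Msp m N → ℝ≥0∞) : Prop :=
  ∀ t ∈ Set.Ioo (0:ℝ) 1, ∀ (u : Esp N → Fsp m) (Du : Esp N → Msp m N),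
    MemW1 (ENNReal.ofReal p) Ω u Du → (¬ ∃ D, IsPwAffine Ω u D) →
    (∫⁻ x in Ω, Zq q L (Du x)) < ⊤ →
    (∀ᵐ x ∂(volume.restrict Ω), Du x ∈ t • closure {ζ : Msp m N | Zq q L ζ < ⊤}) →
    ∃ (v : ℕ → Esp N → Fsp m) (Dv : ℕ → Esp N → Msp m N),
      (∀ n, IsPwAffine Ω (v n) (Dv n)) ∧ LpConv p Ω v u ∧
      Filter.limsup (fun n => ∫⁻ x in Ω, Zq q L (Dv n x)) atTop ≤ ∫⁻ x in Ω, Zq q L (Du x)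

/-- (R1): `L` is radially uniformly upper semicontinuous (ru-usc):
there is `c > 0` such that `limsup_{t→1⁻} sup_{ξ ∈ 𝕃} (L(tξ) - L(ξ))/(c + L(ξ)) ≤ 0`. -/
def RuUsc {m N : ℕ} (L : Msp m N → ℝ≥0∞) : Prop :=
  ∃ c : ℝ≥0∞, 0 < c ∧ c < ⊤ ∧
    ∀ ε : ℝ≥0∞, 0 < ε → ∀ᶠ t : ℝ in 𝓝[<] (1:ℝ), ∀ ξ : Msp m N, L ξ < ⊤ →
      L (t • ξ) ≤ L ξ + ε * (c + L ξ)

/-- A family of measures `(μ_x)_{x∈Ω}` is generated as a Young measure by `{ξ_n}`. -/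
def GeneratesYM {m N : ℕ} (Ω : Set (Esp N)) (ξ : ℕ → Esp N → Msp m N)
    (μ : Esp N → Measure (Msp m N)) : Prop :=
  ∀ Φ : C₀(Msp m N, ℝ), ∀ g : Esp N → ℝ, Integrable g (volume.restrict Ω) →
    Tendsto (fun n => ∫ x in Ω, g x * Φ (ξ n x)) atTop
      (𝓝 (∫ x in Ω, g x * ∫ ζ, Φ ζ ∂(μ x)))


/-- Condition (A₁). -/
def CondA1 {m N : ℕ} (L : Msp m N → ℝ≥0∞) : Prop :=
  ∃ lam : ℝ → ℝ, (∀ R : ℝ, 1 < R → lam R ∈ Set.Ioo (0:ℝ) 1) ∧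
    Tendsto lam atTop (𝓝 1) ∧
    Tendsto (fun R : ℝ => ⨆ (ξ : Msp m N) (_ : L ξ < ⊤ ∧ R ≤ ‖ξ‖), L (lam R • ξ) / L ξ)
      atTop (𝓝 0)

/-- Condition (A₂). -/
def CondA2 {m N : ℕ} (L : Msp m N → ℝ≥0∞) : Prop :=
  ∃ α₁ : ℝ≥0∞, 0 < α₁ ∧ α₁ < ⊤ ∧
    ∀ ξ : Msp m N, L ξ < ⊤ → ∀ t ∈ Set.Icc (0:ℝ) 1, L (t • ξ) ≤ α₁ * (1 + L ξ)

/-- Condition (A₃). -/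
def CondA3 {m N : ℕ} (L : Msp m N → ℝ≥0∞) : Prop :=
  ∀ ξ : Msp m N, ∃ η : ℝ, 0 < η ∧ ∃ α₂ : ℝ≥0∞, 0 < α₂ ∧ α₂ < ⊤ ∧
    ∀ s ∈ Set.Icc (0:ℝ) 1, ∀ ζ a : Msp m N, ‖a‖ ≤ η →
      L (ξ + s • (ζ - ξ) + a) ≤ α₂ * (1 + L ζ)

/-- Condition (Â₃). -/
def CondA3hat {m N : ℕ} (L : Msp m N → ℝ≥0∞) : Prop :=
  ∀ ζ : Msp m N, L ζ < ⊤ → ∃ η : ℝ, 0 < η ∧ ∃ α₂ : ℝ≥0∞, 0 < α₂ ∧ α₂ < ⊤ ∧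
    ∀ s ∈ Set.Icc (0:ℝ) 1, ∀ s' ∈ Set.Icc (0:ℝ) 1, ∀ ζ' : Msp m N, L ζ' < ⊤ →
      ∀ a : Msp m N, ‖a‖ ≤ η →
        L (s • (ζ + s' • (ζ' - ζ)) + (1 - s) • a) ≤ α₂ * (1 + L ζ')

/-- The exponential function on `[0,∞]`. -/
def expE (x : ℝ≥0∞) : ℝ≥0∞ := if x = ⊤ then ⊤ else ENNReal.ofReal (Real.exp x.toReal)

/-- `L` has exponential growth governed by `F`, i.e. `β e^{γ F} ≤ L ≤ α (1 + e^F)`. -/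
def HasExpGrowth {m N : ℕ} (L F : Msp m N → ℝ≥0∞) (α β γ : ℝ) : Prop :=
  ∀ ξ : Msp m N, ENNReal.ofReal β * expE (ENNReal.ofReal γ * F ξ) ≤ L ξ ∧
    L ξ ≤ ENNReal.ofReal α * (1 + expE (F ξ))

/-- Condition (a₁). -/
def Cond_a1 {m N : ℕ} (F : Msp m N → ℝ≥0∞) : Prop :=
  ∃ r : ℝ, 0 < r ∧
    0 < Filter.liminf (fun ξ : Msp m N => F ξ / ENNReal.ofReal (‖ξ‖ ^ r))
      (Filter.comap (fun ξ : Msp m N => ‖ξ‖) Filter.atTop)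

/-- Condition (a₂). -/
def Cond_a2 {m N : ℕ} (F : Msp m N → ℝ≥0∞) : Prop :=
  ∃ ε : ℝ, 0 < ε ∧ ∃ Mb : ℝ≥0∞, Mb < ⊤ ∧ ∀ a : Msp m N, ‖a‖ ≤ ε → F a ≤ Mb

/-- Condition (a₃). -/
def Cond_a3 {m N : ℕ} (F : Msp m N → ℝ≥0∞) : Prop :=
  ∃ θ : ℝ, 0 < θ ∧ ∀ ξ : Msp m N, ∀ t ∈ Set.Icc (0:ℝ) 1,
    F (t • ξ) ≤ ENNReal.ofReal (t ^ θ) * F ξ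

/-- Condition (a₄). -/
def Cond_a4 {m N : ℕ} (F : Msp m N → ℝ≥0∞) (γ : ℝ) : Prop :=
  ∀ ζ ξ : Msp m N, F (ζ - ξ) ≤ ENNReal.ofReal (γ ^ ((1:ℝ)/3)) * (F ζ + F ξ)

/-- Condition (a₅). -/
def Cond_a5 {m N : ℕ} (F : Msp m N → ℝ≥0∞) (γ : ℝ) : Prop :=
  ∀ ζ ξ : Msp m N, F (ζ + ξ) ≤ ENNReal.ofReal (γ ^ ((1:ℝ)/3)) * (F ζ + F ξ)

/-- Convexity for `[0,∞]`-valued functions on `M`. -/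
def IsConvexENN {m N : ℕ} (F : Msp m N → ℝ≥0∞) : Prop :=
  ∀ ξ ζ : Msp m N, ∀ t ∈ Set.Icc (0:ℝ) 1,
    F (t • ξ + (1 - t) • ζ) ≤ ENNReal.ofReal t * F ξ + ENNReal.ofReal (1 - t) * F ζ

/-- `Ĝ(ξ) := liminf_{t→1⁻} G(tξ)`. -/
def hatF {m N : ℕ} (G : Msp m N → ℝ≥0∞) (ξ : Msp m N) : ℝ≥0∞ :=
  Filter.liminf (fun t : ℝ => G (t • ξ)) (𝓝[<] (1:ℝ))


lemma expE_top : expE ⊤ = ⊤ := if_pos rfl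

lemma expE_of_ne_top {x : ℝ≥0∞} (hx : x ≠ ⊤) :
    expE x = ENNReal.ofReal (Real.exp x.toReal) := if_neg hx

lemma one_le_expE (x : ℝ≥0∞) : 1 ≤ expE x := by
  rcases eq_or_ne x ⊤ with h | h
  · simp [h, expE_top]
  · rw [expE_of_ne_top h]
    exact ENNReal.one_le_ofReal.mpr (Real.one_le_exp ENNReal.toReal_nonneg)

lemma expE_mono {x y : ℝ≥0∞} (h : x ≤ y) : expE x ≤ expE y := by
  rcases eq_or_ne y ⊤ with hy | hy
  · simp [hy, expE_top]
  · have hx : x ≠ ⊤ := fun hx => hy (top_le_iff.mp (hx ▸ h))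
    rw [expE_of_ne_top hx, expE_of_ne_top hy]
    exact ENNReal.ofReal_le_ofReal (Real.exp_le_exp.mpr (ENNReal.toReal_mono hy h))

lemma expE_add (x y : ℝ≥0∞) : expE (x + y) = expE x * expE y := by
  rcases eq_or_ne x ⊤ with hx | hx
  · rw [hx, top_add, expE_top, ENNReal.top_mul]
    exact fun h => by simpa [h] using one_le_expE y
  rcases eq_or_ne y ⊤ with hy | hy
  · rw [hy, add_top, expE_top, ENNReal.mul_top]
    exact fun h => by simpa [h] using one_le_expE x
  · rw [expE_of_ne_top hx, expE_of_ne_top hy,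
      expE_of_ne_top (ENNReal.add_ne_top.mpr ⟨hx, hy⟩),
      ENNReal.toReal_add hx hy, Real.exp_add,
      ENNReal.ofReal_mul (Real.exp_nonneg _)]

set_option maxHeartbeats 1000000 in
theorem statement_11
    (m N : ℕ) (hm : 1 ≤ m) (hN : 1 ≤ N)
    (L F : Msp m N → ℝ≥0∞) (hLmeas : Measurable L) (hFmeas : Measurable F)
    (α β γ : ℝ) (hα : 0 < α) (hβ : 0 < β) (hγ : 1 ≤ γ)
    (hgrowth : HasExpGrowth L F α β γ)
    (hFconv : IsConvexENN F) (hF0 : F 0 = 0)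
    (ha1 : Cond_a1 F) (ha2 : Cond_a2 F) :
    CondA1 L ∧ CondA2 L ∧ CondA3hat L := by
  have hβ0 : (ENNReal.ofReal β) ≠ 0 := (ENNReal.ofReal_pos.mpr hβ).ne'
  have hβt : (ENNReal.ofReal β) ≠ ⊤ := ENNReal.ofReal_ne_top
  have hα0 : (ENNReal.ofReal α) ≠ 0 := (ENNReal.ofReal_pos.mpr hα).ne'
  -- L ξ < ⊤ implies F ξ ≠ ⊤
  have hFfin : ∀ ξ : Msp m N, L ξ < ⊤ → F ξ ≠ ⊤ := by
    intro ξ hξ hFt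
    have h1 := (hgrowth ξ).1
    have hγ0 : (ENNReal.ofReal γ) ≠ 0 :=
      (lt_of_lt_of_le one_pos (ENNReal.one_le_ofReal.mpr hγ)).ne'
    rw [hFt, ENNReal.mul_top hγ0, expE_top, ENNReal.mul_top hβ0] at h1
    exact (hξ.trans_le (le_of_eq (top_le_iff.mp h1).symm)).false
  -- convexity consequences
  have hFs : ∀ (ξ : Msp m N) (t : ℝ), 0 ≤ t → t ≤ 1 →
      F (t • ξ) ≤ ENNReal.ofReal t * F ξ := by
    intro ξ t ht0 ht1
    have h := hFconv ξ 0 t ⟨ht0, ht1⟩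
    have e : t • ξ + (1 - t) • (0 : Msp m N) = t • ξ := by module
    rw [e, hF0, mul_zero, add_zero] at h
    exact h
  have hFs' : ∀ (ξ : Msp m N) (t : ℝ), 0 ≤ t → t ≤ 1 → F (t • ξ) ≤ F ξ := by
    intro ξ t ht0 ht1
    refine (hFs ξ t ht0 ht1).trans ?_
    calc ENNReal.ofReal t * F ξ ≤ 1 * F ξ :=
          mul_le_mul_left (ENNReal.ofReal_le_one.mpr ht1) _
      _ = F ξ := one_mul _
  -- lower bound : β e^{F ξ} ≤ L ξ
  have hexpL : ∀ ξ : Msp m N, ENNReal.ofReal β * expE (F ξ) ≤ L ξ := by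
    intro ξ
    refine le_trans ?_ (hgrowth ξ).1
    refine mul_le_mul_right (expE_mono ?_) _
    calc F ξ = 1 * F ξ := (one_mul _).symm
      _ ≤ ENNReal.ofReal γ * F ξ :=
          mul_le_mul_left (ENNReal.one_le_ofReal.mpr hγ) _
  have hexpL' : ∀ ξ : Msp m N, expE (F ξ) ≤ (ENNReal.ofReal β)⁻¹ * L ξ := by
    intro ξ
    calc expE (F ξ) = (ENNReal.ofReal β)⁻¹ * (ENNReal.ofReal β * expE (F ξ)) := by
          rw [← mul_assoc, ENNReal.inv_mul_cancel hβ0 hβt, one_mul]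
      _ ≤ _ := mul_le_mul_right (hexpL ξ) _
  refine ⟨?_, ?_, ?_⟩
  · -- CondA1
    obtain ⟨r, hr, hlinf⟩ := ha1
    rw [Filter.liminf_eq] at hlinf
    obtain ⟨c, hc_mem, hc0⟩ := lt_sSup_iff.mp hlinf
    set c' : ℝ≥0∞ := min c 1 with hc'def
    have hc'0 : c' ≠ 0 := (lt_min hc0 one_pos).ne'
    have hc't : c' ≠ ⊤ := ((min_le_right c 1).trans_lt ENNReal.one_lt_top).ne
    set b : ℝ := c'.toReal with hbdef
    have hb0 : 0 < b := ENNReal.toReal_pos hc'0 hc't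
    -- eventual lower bound on F
    have hc_mem' : ∀ᶠ s in atTop, ∀ ξ : Msp m N, ‖ξ‖ = s →
        c ≤ F ξ / ENNReal.ofReal (‖ξ‖ ^ r) := Filter.eventually_comap.mp hc_mem
    obtain ⟨S₀, hS₀⟩ := Filter.eventually_atTop.mp hc_mem'
    set S : ℝ := max S₀ 2 with hSdef
    have hS2 : (2:ℝ) ≤ S := le_max_right _ _
    have hFlow : ∀ ξ : Msp m N, S ≤ ‖ξ‖ → ENNReal.ofReal (b * ‖ξ‖ ^ r) ≤ F ξ := by
      intro ξ hξ
      have hnorm1 : (1:ℝ) ≤ ‖ξ‖ := le_trans (by linarith) hξ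
      have hpow : 0 < ‖ξ‖ ^ r := Real.rpow_pos_of_pos (by linarith) r
      have hc := hS₀ ‖ξ‖ (le_trans (le_max_left _ _) hξ) ξ rfl
      have hc' : c' ≤ F ξ / ENNReal.ofReal (‖ξ‖ ^ r) := le_trans (min_le_left _ _) hc
      have hmul : c' * ENNReal.ofReal (‖ξ‖ ^ r) ≤ F ξ :=
        (ENNReal.le_div_iff_mul_le (Or.inl ((ENNReal.ofReal_pos.mpr hpow).ne'))
          (Or.inl ENNReal.ofReal_ne_top)).mp hc'
      calc ENNReal.ofReal (b * ‖ξ‖ ^ r)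
          = ENNReal.ofReal b * ENNReal.ofReal (‖ξ‖ ^ r) :=
            ENNReal.ofReal_mul hb0.le
        _ = c' * ENNReal.ofReal (‖ξ‖ ^ r) := by rw [hbdef, ENNReal.ofReal_toReal hc't]
        _ ≤ F ξ := hmul
    -- the function λ
    set lam : ℝ → ℝ := fun R => 1 - (max R 2) ^ (-(r/2)) with hlamdef
    have hlam_mem : ∀ R : ℝ, lam R ∈ Set.Ioo (0:ℝ) 1 := by
      intro R
      have h1 : (1:ℝ) < max R 2 := lt_of_lt_of_le one_lt_two (le_max_right _ _)
      have hp0 : 0 < (max R 2) ^ (-(r/2)) := Real.rpow_pos_of_pos (by linarith) _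
      have hp1 : (max R 2) ^ (-(r/2)) < 1 :=
        Real.rpow_lt_one_of_one_lt_of_neg h1 (by linarith)
      exact ⟨by simp only [hlamdef]; linarith, by simp only [hlamdef]; linarith⟩
    refine ⟨lam, fun R _ => hlam_mem R, ?_, ?_⟩
    · -- lam → 1
      have hmax : Tendsto (fun R : ℝ => max R 2) atTop atTop :=
        tendsto_atTop_mono (fun R => le_max_left R 2) tendsto_id
      have h0 : Tendsto (fun R : ℝ => (max R 2) ^ (-(r/2))) atTop (𝓝 0) :=
        (tendsto_rpow_neg_atTop (by linarith)).comp hmax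
      have := (tendsto_const_nhds (x := (1:ℝ)) (f := atTop)).sub h0
      simpa using this
    · -- the sup tends to 0
      set g : ℝ → ℝ≥0∞ :=
        fun R => ENNReal.ofReal (2 * α / β * Real.exp (-(b * R ^ (r/2)))) with hgdef
      have key : ∀ R : ℝ, S ≤ R → ∀ ξ : Msp m N, L ξ < ⊤ → R ≤ ‖ξ‖ →
          L (lam R • ξ) / L ξ ≤ g R := by
        intro R hSR ξ hLξ hRξ
        have hR2 : (2:ℝ) ≤ R := le_trans hS2 hSR
        have hR0 : (0:ℝ) < R := by linarith
        have hmaxR : max R 2 = R := max_eq_left hR2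
        have hFξ : F ξ ≠ ⊤ := hFfin ξ hLξ
        set f : ℝ := (F ξ).toReal with hfdef
        have hf0 : 0 ≤ f := ENNReal.toReal_nonneg
        have hSξ : S ≤ ‖ξ‖ := le_trans hSR hRξ
        have hfb : b * ‖ξ‖ ^ r ≤ f :=
          (ENNReal.ofReal_le_iff_le_toReal hFξ).mp (hFlow ξ hSξ)
        have hfR : b * R ^ r ≤ f := by
          refine le_trans ?_ hfb
          have : R ^ r ≤ ‖ξ‖ ^ r := Real.rpow_le_rpow hR0.le hRξ hr.le
          nlinarith
        obtain ⟨hl0, hl1⟩ := hlam_mem R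
        -- numerator bound
        have hnum : L (lam R • ξ) ≤ ENNReal.ofReal (2 * α * Real.exp (lam R * f)) := by
          have h1 : F (lam R • ξ) ≤ ENNReal.ofReal (lam R * f) := by
            refine le_trans (hFs ξ (lam R) hl0.le hl1.le) ?_
            rw [ENNReal.ofReal_mul hl0.le, hfdef, ENNReal.ofReal_toReal hFξ]
          have h2 : expE (F (lam R • ξ)) ≤ ENNReal.ofReal (Real.exp (lam R * f)) := by
            refine le_trans (expE_mono h1) ?_
            rw [expE_of_ne_top ENNReal.ofReal_ne_top,
              ENNReal.toReal_ofReal (by positivity)]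
          have h3 : (1:ℝ≥0∞) ≤ ENNReal.ofReal (Real.exp (lam R * f)) :=
            ENNReal.one_le_ofReal.mpr (Real.one_le_exp (by positivity))
          calc L (lam R • ξ) ≤ ENNReal.ofReal α * (1 + expE (F (lam R • ξ))) :=
                (hgrowth _).2
            _ ≤ ENNReal.ofReal α * (ENNReal.ofReal (Real.exp (lam R * f)) +
                ENNReal.ofReal (Real.exp (lam R * f))) :=
                mul_le_mul_right (add_le_add h3 h2) _
            _ = ENNReal.ofReal (2 * α * Real.exp (lam R * f)) := by
                rw [← two_mul, ← ENNReal.ofReal_ofNat, ← ENNReal.ofReal_mul (by norm_num),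
                  ← ENNReal.ofReal_mul hα.le]
                ring_nf
        -- denominator bound
        have hden : ENNReal.ofReal (β * Real.exp f) ≤ L ξ := by
          refine le_trans ?_ (hexpL ξ)
          rw [ENNReal.ofReal_mul hβ.le, expE_of_ne_top hFξ]
        have hdiv := ENNReal.div_le_div hnum hden
        refine le_trans hdiv ?_
        rw [← ENNReal.ofReal_div_of_pos (by positivity)]
        refine ENNReal.ofReal_le_ofReal ?_
        have hexp_le : Real.exp (lam R * f) / Real.exp f ≤ Real.exp (-(b * R ^ (r/2))) := by
          rw [← Real.exp_sub]
          refine Real.exp_le_exp.mpr ?_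
          have h1lam : 1 - lam R = R ^ (-(r/2)) := by
            simp only [hlamdef, hmaxR]; ring
          have hstep : b * R ^ (r/2) ≤ (1 - lam R) * f := by
            rw [h1lam]
            have hf' : b * R ^ r ≤ f := hfR
            have hRpos : (0:ℝ) < R ^ (-(r/2)) := Real.rpow_pos_of_pos hR0 _
            have : R ^ (-(r/2)) * (b * R ^ r) = b * R ^ (r/2) := by
              rw [mul_comm (R ^ (-(r/2))), mul_assoc, ← Real.rpow_add hR0]
              ring_nf
            nlinarith
          linarith
        calc 2 * α * Real.exp (lam R * f) / (β * Real.exp f)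
            = 2 * α / β * (Real.exp (lam R * f) / Real.exp f) :=
              mul_div_mul_comm _ _ _ _
          _ ≤ 2 * α / β * Real.exp (-(b * R ^ (r/2))) := by
              have : (0:ℝ) ≤ 2 * α / β := by positivity
              nlinarith [hexp_le, Real.exp_pos (-(b * R ^ (r/2)))]
      -- squeeze
      have hup : ∀ᶠ R : ℝ in atTop,
          (⨆ (ξ : Msp m N) (_ : L ξ < ⊤ ∧ R ≤ ‖ξ‖), L (lam R • ξ) / L ξ) ≤ g R := by
        filter_upwards [Filter.eventually_ge_atTop S] with R hSR
        exact iSup_le fun ξ => iSup_le fun hξ => key R hSR ξ hξ.1 hξ.2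
      have hg0 : Tendsto g atTop (𝓝 0) := by
        have h1 : Tendsto (fun R : ℝ => b * R ^ (r/2)) atTop atTop :=
          (tendsto_rpow_atTop (by linarith)).const_mul_atTop hb0
        have h2 : Tendsto (fun R : ℝ => -(b * R ^ (r/2))) atTop atBot :=
          tendsto_neg_atTop_atBot.comp h1
        have h3 : Tendsto (fun R : ℝ => 2 * α / β * Real.exp (-(b * R ^ (r/2))))
            atTop (𝓝 0) := by
          have := (Real.tendsto_exp_atBot.comp h2).const_mul (2 * α / β)
          simpa using this
        have := ENNReal.tendsto_ofReal h3
        simpa [hgdef] using this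
      refine tendsto_of_tendsto_of_tendsto_of_le_of_le' tendsto_const_nhds hg0
        (Filter.Eventually.of_forall fun R => zero_le) hup
  · -- CondA2
    refine ⟨ENNReal.ofReal α * (1 + (ENNReal.ofReal β)⁻¹), ?_, ?_, ?_⟩
    · exact ENNReal.mul_pos hα0 (by simp)
    · exact ENNReal.mul_lt_top ENNReal.ofReal_lt_top
        (ENNReal.add_lt_top.mpr ⟨ENNReal.one_lt_top, ENNReal.inv_lt_top.mpr
          (ENNReal.ofReal_pos.mpr hβ)⟩)
    · intro ξ hξ t ⟨ht0, ht1⟩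
      have hkey : 1 + (ENNReal.ofReal β)⁻¹ * L ξ ≤
          (1 + (ENNReal.ofReal β)⁻¹) * (1 + L ξ) := by
        rw [add_mul, one_mul, mul_add, mul_one]
        exact add_le_add le_self_add le_add_self
      calc L (t • ξ) ≤ ENNReal.ofReal α * (1 + expE (F (t • ξ))) := (hgrowth _).2
        _ ≤ ENNReal.ofReal α * (1 + expE (F ξ)) :=
            mul_le_mul_right (add_le_add_right (expE_mono (hFs' ξ t ht0 ht1)) _) _
        _ ≤ ENNReal.ofReal α * (1 + (ENNReal.ofReal β)⁻¹ * L ξ) :=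
            mul_le_mul_right (add_le_add_right (hexpL' ξ) _) _
        _ ≤ ENNReal.ofReal α * ((1 + (ENNReal.ofReal β)⁻¹) * (1 + L ξ)) :=
            mul_le_mul_right hkey _
        _ = ENNReal.ofReal α * (1 + (ENNReal.ofReal β)⁻¹) * (1 + L ξ) :=
            (mul_assoc _ _ _).symm
  · -- CondA3hat
    intro ζ hζ
    obtain ⟨ε, hε, Mb, hMb, hMbF⟩ := ha2
    have hFζ : F ζ ≠ ⊤ := hFfin ζ hζ
    refine ⟨ε, hε, ENNReal.ofReal α *
      (1 + (ENNReal.ofReal β)⁻¹ * expE (F ζ) * expE Mb), ?_, ?_, ?_⟩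
    · exact ENNReal.mul_pos hα0 (by simp)
    · refine ENNReal.mul_lt_top ENNReal.ofReal_lt_top ?_
      refine ENNReal.add_lt_top.mpr ⟨ENNReal.one_lt_top, ?_⟩
      refine ENNReal.mul_lt_top (ENNReal.mul_lt_top ?_ ?_) ?_
      · exact ENNReal.inv_lt_top.mpr (ENNReal.ofReal_pos.mpr hβ)
      · rw [expE_of_ne_top hFζ]; exact ENNReal.ofReal_lt_top
      · rw [expE_of_ne_top hMb.ne]; exact ENNReal.ofReal_lt_top
    · intro s ⟨hs0, hs1⟩ s' ⟨hs'0, hs'1⟩ ζ' hζ' a ha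
      -- F of the interior point
      have hmid : ζ + s' • (ζ' - ζ) = s' • ζ' + (1 - s') • ζ := by module
      have h1 : F (ζ + s' • (ζ' - ζ)) ≤ F ζ' + F ζ := by
        rw [hmid]
        refine le_trans (hFconv ζ' ζ s' ⟨hs'0, hs'1⟩) ?_
        gcongr
        · exact le_trans (mul_le_mul_left (ENNReal.ofReal_le_one.mpr hs'1) _)
            (one_mul _).le
        · exact le_trans (mul_le_mul_left (ENNReal.ofReal_le_one.mpr (by linarith)) _)
            (one_mul _).le
      have h2 : F (s • (ζ + s' • (ζ' - ζ)) + (1 - s) • a) ≤ F ζ' + F ζ + Mb := by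
        refine le_trans (hFconv (ζ + s' • (ζ' - ζ)) a s ⟨hs0, hs1⟩) ?_
        have hFa : F a ≤ Mb := hMbF a ha
        calc ENNReal.ofReal s * F (ζ + s' • (ζ' - ζ)) + ENNReal.ofReal (1 - s) * F a
            ≤ 1 * (F ζ' + F ζ) + 1 * Mb := by
              gcongr
              · exact ENNReal.ofReal_le_one.mpr hs1
              · exact ENNReal.ofReal_le_one.mpr (by linarith)
          _ = F ζ' + F ζ + Mb := by rw [one_mul, one_mul]
      -- conclude
      have h3 : expE (F (s • (ζ + s' • (ζ' - ζ)) + (1 - s) • a)) ≤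
          expE (F ζ') * expE (F ζ) * expE Mb := by
        refine le_trans (expE_mono h2) ?_
        rw [expE_add, expE_add]
      have h4 : expE (F ζ') * expE (F ζ) * expE Mb ≤
          (ENNReal.ofReal β)⁻¹ * expE (F ζ) * expE Mb * L ζ' := by
        calc expE (F ζ') * expE (F ζ) * expE Mb
            ≤ (ENNReal.ofReal β)⁻¹ * L ζ' * expE (F ζ) * expE Mb := by
              gcongr; exact hexpL' ζ'
          _ = (ENNReal.ofReal β)⁻¹ * expE (F ζ) * expE Mb * L ζ' := by ring
      have hkey : 1 + (ENNReal.ofReal β)⁻¹ * expE (F ζ) * expE Mb * L ζ' ≤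
          (1 + (ENNReal.ofReal β)⁻¹ * expE (F ζ) * expE Mb) * (1 + L ζ') := by
        rw [add_mul, one_mul, mul_add, mul_one]
        exact add_le_add le_self_add le_add_self
      calc L (s • (ζ + s' • (ζ' - ζ)) + (1 - s) • a)
          ≤ ENNReal.ofReal α * (1 + expE (F (s • (ζ + s' • (ζ' - ζ)) + (1 - s) • a))) :=
            (hgrowth _).2
        _ ≤ ENNReal.ofReal α *
            (1 + (ENNReal.ofReal β)⁻¹ * expE (F ζ) * expE Mb * L ζ') :=
            mul_le_mul_right (add_le_add_right (le_trans h3 h4) _) _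
        _ ≤ ENNReal.ofReal α *
            ((1 + (ENNReal.ofReal β)⁻¹ * expE (F ζ) * expE Mb) * (1 + L ζ')) :=
            mul_le_mul_right hkey _
        _ = ENNReal.ofReal α * (1 + (ENNReal.ofReal β)⁻¹ * expE (F ζ) * expE Mb) *
            (1 + L ζ') := (mul_assoc _ _ _).symm

end
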